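/- arXiv:1211.2144 — 7 statements merged into one kernel-verified Lean document; each statement's English description precedes it below -/
import Mathlib

section
/- Let n ≥ 1 and let ≈ be the equivalence relation on (ℤ/nℤ) × (ℤ/nℤ) generated by (g,k) ≈ (g, k+g) and (g,k) ≈ (k, −g). For p, q ∈ ℤ/nℤ, one has (p,0) ≈ (q,0) if and only if the cyclic subgroups generated by p and by q in ℤ/nℤ are equal, i.e. ⟨p⟩ = ⟨q⟩. -/
/-! The subgroup `⟨g⟩ + ⟨k⟩` is invariant under both moves, and for `(p, 0)` it is `⟨p⟩`.
Conversely, since `≈` is symmetric, shearing moves `(g, k)` to `(g, k + z • g)` for every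
integer `z`, so `⟨p⟩ = ⟨q⟩` gives `(p, 0) ≈ (p, q) ≈ (q, -p) ≈ (q, 0)`. -/

/-- The base relation on `(ℤ/nℤ) × (ℤ/nℤ)`: `(g,k) ↦ (g, k+g)` and `(g,k) ↦ (k, -g)`. -/
def baseRel (n : ℕ) : (ZMod n × ZMod n) → (ZMod n × ZMod n) → Prop :=
  fun x y => y = (x.1, x.2 + x.1) ∨ y = (x.2, -x.1)

open AddSubgroup Relation

section Invariant

variable {G : Type*} [AddGroup G]

lemma zmultiples_sup_zmultiples_add_self (g k : G) :
    zmultiples g ⊔ zmultiples (k + g) = zmultiples g ⊔ zmultiples k := by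
  apply le_antisymm <;> refine sup_le le_sup_left (zmultiples_le.mpr ?_)
  · exact add_mem (mem_sup_right (mem_zmultiples k)) (mem_sup_left (mem_zmultiples g))
  · simpa using
      sub_mem (mem_sup_right (mem_zmultiples (k + g))) (mem_sup_left (mem_zmultiples g))

lemma zmultiples_sup_zmultiples_neg (g k : G) :
    zmultiples k ⊔ zmultiples (-g) = zmultiples g ⊔ zmultiples k := by
  rw [zmultiples_neg, sup_comm]

end Invariant

lemma zmultiples_sup_eq_of_eqvGen {n : ℕ} {x y : ZMod n × ZMod n}
    (h : EqvGen (baseRel n) x y) :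
    zmultiples x.1 ⊔ zmultiples x.2 = zmultiples y.1 ⊔ zmultiples y.2 := by
  induction h with
  | rel x y hxy =>
    rcases hxy with rfl | rfl
    · exact (zmultiples_sup_zmultiples_add_self _ _).symm
    · exact (zmultiples_sup_zmultiples_neg _ _).symm
  | refl => rfl
  | symm _ _ _ ih => exact ih.symm
  | trans _ _ _ _ _ ih₁ ih₂ => exact ih₁.trans ih₂

lemma eqvGen_add_zsmul {n : ℕ} (g k : ZMod n) (z : ℤ) :
    EqvGen (baseRel n) (g, k) (g, k + z • g) := by
  induction z using Int.induction_on with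
  | zero => simpa using EqvGen.refl _
  | succ m ih =>
    refine ih.trans _ _ _ (EqvGen.rel _ _ (Or.inl ?_))
    rw [add_zsmul, one_zsmul, add_assoc]
  | pred m ih =>
    refine ih.trans _ _ _ (EqvGen.symm _ _ (EqvGen.rel _ _ (Or.inl ?_)))
    rw [sub_zsmul, one_zsmul, ← add_assoc, neg_add_cancel_right]

lemma eqvGen_of_sub_mem_zmultiples {n : ℕ} {g k k' : ZMod n} (h : k' - k ∈ zmultiples g) :
    EqvGen (baseRel n) (g, k) (g, k') := by
  obtain ⟨z, hz⟩ := mem_zmultiples_iff.mp h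
  simpa [hz] using eqvGen_add_zsmul g k z

theorem pair_zero_equiv_iff_same_cyclic_subgroup_general (n : ℕ) (p q : ZMod n) :
    Relation.EqvGen (baseRel n) (p, 0) (q, 0) ↔
      AddSubgroup.zmultiples p = AddSubgroup.zmultiples q := by
  constructor
  · intro h
    simpa using zmultiples_sup_eq_of_eqvGen h
  · intro h
    have hq : q - 0 ∈ zmultiples p := by simp [h]
    have hp : 0 - -p ∈ zmultiples q := by simp [← h]
    have hrot : EqvGen (baseRel n) (p, q) (q, -p) := EqvGen.rel _ _ (Or.inr rfl)
    exact ((eqvGen_of_sub_mem_zmultiples hq).trans _ _ _ hrot).trans _ _ _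
      (eqvGen_of_sub_mem_zmultiples hp)

theorem pair_zero_equiv_iff_same_cyclic_subgroup (n : ℕ) (hn : 1 ≤ n) (p q : ZMod n) :
    Relation.EqvGen (baseRel n) (p, 0) (q, 0) ↔
      AddSubgroup.zmultiples p = AddSubgroup.zmultiples q :=
  pair_zero_equiv_iff_same_cyclic_subgroup_general n p q
end

section
/- Let n ≥ 1 and let ≈ be the equivalence relation on (ℤ/nℤ) × (ℤ/nℤ) generated by (g,k) ≈ (g, k+g) and (g,k) ≈ (k, −g). Then the number of equivalence classes of ≈ equals the number of subgroups of ℤ/nℤ, which equals the number of positive divisors τ(n) of n. -/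
/-!
The subgroup of `ℤ/nℤ` generated by the two coordinates of a pair is invariant under both moves.
Conversely, the moves generate the elementary operations of `SL₂(ℤ)` on pairs, so the Euclidean
algorithm brings every pair to a pair `(g, 0)`, and `(g, 0) ≈ (g', 0)` as soon as `g` and `g'`
generate the same subgroup. Hence the classes correspond to the subgroups of the cyclic group
`ℤ/nℤ`, which are the `⟨d⟩` for the divisors `d` of `n`.
-/

open AddSubgroup Relation

namespace AddSubgroup

variable {G : Type*} [AddGroup G]

theorem closure_pair_le_iff {a b : G} {H : AddSubgroup G} :
    closure {a, b} ≤ H ↔ a ∈ H ∧ b ∈ H := by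
  simp [closure_le, Set.insert_subset_iff]

theorem mem_closure_pair_left (a b : G) : a ∈ closure {a, b} :=
  subset_closure (Set.mem_insert a _)

theorem mem_closure_pair_right (a b : G) : b ∈ closure {a, b} :=
  subset_closure (Set.mem_insert_of_mem a rfl)

theorem closure_pair_add_left (g k : G) : closure {g, k + g} = closure {g, k} := by
  refine le_antisymm (closure_pair_le_iff.2 ⟨mem_closure_pair_left g k, ?_⟩)
    (closure_pair_le_iff.2 ⟨mem_closure_pair_left g _, ?_⟩)
  · exact add_mem (mem_closure_pair_right g k) (mem_closure_pair_left g k)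
  · simpa using add_mem (mem_closure_pair_right g (k + g)) (neg_mem (mem_closure_pair_left g _))

theorem closure_pair_neg_swap (g k : G) : closure {k, -g} = closure {g, k} := by
  refine le_antisymm (closure_pair_le_iff.2 ⟨mem_closure_pair_right g k, ?_⟩)
    (closure_pair_le_iff.2 ⟨?_, mem_closure_pair_left k _⟩)
  · exact neg_mem (mem_closure_pair_left g k)
  · simpa using neg_mem (mem_closure_pair_right k (-g))

theorem closure_pair_zero (g : G) : closure {g, 0} = zmultiples g := by
  rw [Set.pair_comm, closure_insert_zero, zmultiples_eq_closure]

end AddSubgroup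

namespace baseRel

variable {n : ℕ}

theorem closure_pair_eq_of_eqvGen {x y : ZMod n × ZMod n} (h : EqvGen (baseRel n) x y) :
    AddSubgroup.closure {x.1, x.2} = AddSubgroup.closure {y.1, y.2} := by
  induction h with
  | rel x y h =>
    rcases h with rfl | rfl
    · exact (closure_pair_add_left _ _).symm
    · exact (closure_pair_neg_swap _ _).symm
  | refl => rfl
  | symm _ _ _ ih => exact ih.symm
  | trans _ _ _ _ _ ih₁ ih₂ => exact ih₁.trans ih₂

theorem eqvGen_add_self_snd (g k : ZMod n) : EqvGen (baseRel n) (g, k) (g, k + g) :=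
  .rel _ _ (.inl rfl)

theorem eqvGen_swap (g k : ZMod n) : EqvGen (baseRel n) (g, k) (k, -g) :=
  .rel _ _ (.inr rfl)

theorem eqvGen_neg_swap (g k : ZMod n) : EqvGen (baseRel n) (g, k) (-k, g) := by
  simpa using (eqvGen_swap (-k) g).symm

theorem eqvGen_add_zsmul_snd (g k : ZMod n) (m : ℤ) :
    EqvGen (baseRel n) (g, k) (g, k + m • g) := by
  induction m using Int.induction_on with
  | zero => simpa using EqvGen.refl _
  | succ i ih =>
    rw [add_zsmul, one_zsmul, ← add_assoc]
    exact ih.trans _ _ _ (eqvGen_add_self_snd _ _)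
  | pred i ih =>
    have h := (eqvGen_add_self_snd g (k + (-i - 1 : ℤ) • g)).symm
    rw [sub_zsmul, one_zsmul, add_assoc, neg_add_cancel_right] at h
    rw [sub_zsmul, one_zsmul]
    exact ih.trans _ _ _ h

theorem eqvGen_add_zsmul_fst (g k : ZMod n) (m : ℤ) :
    EqvGen (baseRel n) (g, k) (g + m • k, k) := by
  simpa using ((eqvGen_neg_swap g k).trans _ _ _ (eqvGen_add_zsmul_snd (-k) g (-m))).trans _ _ _
    (eqvGen_swap _ _)

theorem exists_eqvGen_snd_eq_zero [NeZero n] (x : ZMod n × ZMod n) :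
    ∃ g, EqvGen (baseRel n) x (g, 0) := by
  obtain ⟨a, b⟩ := x
  induction hb : b.val using Nat.strong_induction_on generalizing a b with
  | _ m ih =>
  rcases eq_or_ne b 0 with rfl | hb0
  · exact ⟨a, .refl _⟩
  -- one step of Euclid: `(a, b) ≈ (a - q • b, b) = (r, b) ≈ (-b, r)` with `r < b.val`
  set r := a.val % b.val
  have hr : r < b.val := Nat.mod_lt _ (ZMod.val_pos.mpr hb0)
  set q := a.val / b.val
  have hq : a + (-q : ℤ) • b = r := by
    have h : ((a.val : ℕ) : ZMod n) = ((b.val * q + r : ℕ) : ZMod n) := by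
      rw [Nat.div_add_mod]
    simp only [Nat.cast_add, Nat.cast_mul, ZMod.natCast_zmod_val] at h
    simp only [neg_zsmul, natCast_zsmul, nsmul_eq_mul]
    linear_combination h
  have hstep : EqvGen (baseRel n) (a, b) (-b, (r : ZMod n)) := by
    refine (eqvGen_add_zsmul_fst a b (-q)).trans _ _ _ ?_
    rw [hq]
    exact eqvGen_neg_swap _ _
  obtain ⟨g, hg⟩ := ih r (hb ▸ hr) (-b) r (ZMod.val_natCast_of_lt (hr.trans (ZMod.val_lt b)))
  exact ⟨g, hstep.trans _ _ _ hg⟩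

theorem eqvGen_of_zmultiples_eq {g g' : ZMod n} (h : zmultiples g = zmultiples g') :
    EqvGen (baseRel n) (g, 0) (g', 0) := by
  obtain ⟨m, hm⟩ := mem_zmultiples_iff.1 (h ▸ mem_zmultiples g')
  obtain ⟨m', hm'⟩ := mem_zmultiples_iff.1 (h ▸ mem_zmultiples g)
  -- `(g, 0) ≈ (g, m • g) = (g, g') ≈ (g', -g) ≈ (g', -g + m' • g') = (g', 0)`
  have h₁ := eqvGen_add_zsmul_snd g 0 m
  have h₂ := eqvGen_add_zsmul_snd g' (-g) m'
  rw [zero_add, hm] at h₁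
  rw [hm', neg_add_cancel] at h₂
  exact h₁.trans _ _ _ ((eqvGen_swap g g').trans _ _ _ h₂)

theorem eqvGen_iff_closure_pair_eq [NeZero n] {x y : ZMod n × ZMod n} :
    EqvGen (baseRel n) x y ↔ AddSubgroup.closure {x.1, x.2} = AddSubgroup.closure {y.1, y.2} := by
  refine ⟨closure_pair_eq_of_eqvGen, fun h => ?_⟩
  obtain ⟨g, hg⟩ := exists_eqvGen_snd_eq_zero x
  obtain ⟨g', hg'⟩ := exists_eqvGen_snd_eq_zero y
  have hgg' : zmultiples g = zmultiples g' := by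
    have := (closure_pair_eq_of_eqvGen hg).symm.trans (h.trans (closure_pair_eq_of_eqvGen hg'))
    rwa [closure_pair_zero, closure_pair_zero] at this
  exact hg.trans _ _ _ ((eqvGen_of_zmultiples_eq hgg').trans _ _ _ hg'.symm)

theorem card_quot_eq_card_addSubgroup [NeZero n] :
    Nat.card (Quot (baseRel n)) = Nat.card (AddSubgroup (ZMod n)) := by
  refine Nat.card_eq_of_bijective
    (Quot.lift (fun x => AddSubgroup.closure {x.1, x.2})
      fun _ _ h => closure_pair_eq_of_eqvGen (.rel _ _ h)) ⟨?_, fun H => ?_⟩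
  · rintro ⟨x⟩ ⟨y⟩ h
    exact Quot.eqvGen_sound (eqvGen_iff_closure_pair_eq.2 h)
  · obtain ⟨g, rfl⟩ := H.isAddCyclic_iff_exists_zmultiples_eq_top.1 inferInstance
    exact ⟨Quot.mk _ (g, 0), closure_pair_zero g⟩

end baseRel

namespace ZMod

theorem zmultiples_natCast_gcd (n a : ℕ) :
    zmultiples ((n.gcd a : ℕ) : ZMod n) = zmultiples (a : ZMod n) := by
  refine le_antisymm (zmultiples_le.2 (mem_zmultiples_iff.2 ⟨Nat.gcdB n a, ?_⟩))
    (zmultiples_le.2 (mem_zmultiples_iff.2 ?_))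
  · have h := congrArg (Int.cast : ℤ → ZMod n) (Nat.gcd_eq_gcd_ab n a)
    push_cast [ZMod.natCast_self] at h
    rw [h, zsmul_eq_mul]
    ring
  · obtain ⟨c, hc⟩ := Nat.gcd_dvd_right n a
    refine ⟨c, ?_⟩
    rw [natCast_zsmul, nsmul_eq_mul, mul_comm, ← Nat.cast_mul, ← hc]

theorem dvd_of_natCast_mem_zmultiples {n d e : ℕ} (he : e ∣ n)
    (h : (d : ZMod n) ∈ zmultiples (e : ZMod n)) : e ∣ d := by
  obtain ⟨k, hk⟩ := mem_zmultiples_iff.1 h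
  have hn : (n : ℤ) ∣ d - k * e := by
    rw [← ZMod.intCast_zmod_eq_zero_iff_dvd]
    push_cast
    rw [← hk, zsmul_eq_mul, sub_self]
  have hd : (e : ℤ) ∣ d := by
    simpa using ((Int.natCast_dvd_natCast.2 he).trans hn).add (dvd_mul_left (e : ℤ) k)
  exact_mod_cast hd

theorem card_addSubgroup_eq_card_divisors (n : ℕ) [NeZero n] :
    Nat.card (AddSubgroup (ZMod n)) = n.divisors.card := by
  rw [← Nat.card_eq_finsetCard]
  refine (Nat.card_eq_of_bijective (fun d : n.divisors => zmultiples (d : ZMod n))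
    ⟨?_, fun H => ?_⟩).symm
  · rintro ⟨d, hd⟩ ⟨e, he⟩ (h : zmultiples (d : ZMod n) = zmultiples (e : ZMod n))
    rw [Nat.mem_divisors] at hd he
    have hde : (d : ZMod n) ∈ zmultiples (e : ZMod n) := h ▸ mem_zmultiples _
    have hed : (e : ZMod n) ∈ zmultiples (d : ZMod n) := h ▸ mem_zmultiples _
    exact Subtype.ext <| Nat.dvd_antisymm (dvd_of_natCast_mem_zmultiples hd.1 hed)
      (dvd_of_natCast_mem_zmultiples he.1 hde)
  · obtain ⟨g, rfl⟩ := H.isAddCyclic_iff_exists_zmultiples_eq_top.1 inferInstance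
    refine ⟨⟨n.gcd g.val, Nat.mem_divisors.2 ⟨Nat.gcd_dvd_left _ _, NeZero.ne n⟩⟩, ?_⟩
    simp only [zmultiples_natCast_gcd, ZMod.natCast_zmod_val]

end ZMod

theorem card_classes_eq_num_subgroups_eq_tau (n : ℕ) (hn : 1 ≤ n) :
    Nat.card (Quot (baseRel n)) = Nat.card (AddSubgroup (ZMod n)) ∧
      Nat.card (AddSubgroup (ZMod n)) = n.divisors.card := by
  have : NeZero n := ⟨by omega⟩
  exact ⟨baseRel.card_quot_eq_card_addSubgroup, ZMod.card_addSubgroup_eq_card_divisors n⟩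
end

section
/- Let n ≥ 1 and let D_{2n} be the dihedral group of order 2n. Let ≈ be the equivalence relation on the set C(D_{2n}) = {(g,k) : g*k = k*g} of commuting pairs generated by (g,k) ≈ (g, k*g) and (g,k) ≈ (k, g⁻¹). Then the number of equivalence classes of ≈ equals the number of commutative (abelian) subgroups of D_{2n}. -/
/-- The set of commuting pairs of a group `G`. -/
def CommPairs (G : Type*) [Group G] : Type _ := {p : G × G // p.1 * p.2 = p.2 * p.1}

/-- The base relation on commuting pairs: `(g,k) ↦ (g, k*g)` and `(g,k) ↦ (k, g⁻¹)`. -/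
def genRel (G : Type*) [Group G] : CommPairs G → CommPairs G → Prop :=
  fun x y => (y.1 : G × G) = (x.1.1, x.1.2 * x.1.1) ∨ (y.1 : G × G) = (x.1.2, x.1.1⁻¹)

/-!
Both moves preserve the subgroup `⟨g, k⟩` generated by a commuting pair, so sending a class to
this (abelian) subgroup is well defined. It is onto because every subgroup of `D_{2n}` is generated
by a generator of its cyclic group of rotations together with one of its reflections, if any.
For injectivity: on pairs of powers `(x ^ a, x ^ b)` the moves act as the generators of `SL₂(ℤ)`
on `(a, b)`, so the Euclidean algorithm joins every pair generating a cyclic group `⟨y⟩` to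
`(y, 1)`. A non-cyclic abelian subgroup of `D_{2n}` contains a reflection, so all its elements are
involutions; it is then a Klein four-group `{1, u, v, uv}`, whose six generating pairs are joined
by the moves.
-/

open Subgroup

theorem Int.apply_eq_apply_gcd_zero {α : Type*} (f : ℤ → ℤ → α)
    (hadd : ∀ a b, f a (b + a) = f a b) (hswap : ∀ a b, f b (-a) = f a b) (a b : ℤ) :
    f a b = f (a.gcd b) 0 := by
  have hmul (a b t : ℤ) : f a (b + t * a) = f a b := by
    induction t using Int.induction_on with
    | zero => simp
    | succ t ih => rw [← ih, ← hadd a (b + t * a)]; congr 1; ring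
    | pred t ih => rw [← ih, ← hadd a (b + (-(t : ℤ) - 1) * a)]; congr 1; ring
  have hneg (a b : ℤ) : f (-a) (-b) = f a b := (hswap b (-a)).trans (hswap a b)
  induction h : a.natAbs using Nat.strong_induction_on generalizing a b with
  | _ m ih =>
    subst h
    rcases eq_or_ne a 0 with rfl | ha
    · rw [← hswap, neg_zero, Int.gcd_zero_left]
      rcases Int.natAbs_eq b with hb | hb
      · rw [← hb]
      · have h := hneg b.natAbs 0
        rw [neg_zero, ← hb] at h
        exact h
    · have hlt : (b % a).natAbs < a.natAbs := by
        have := Int.emod_nonneg b ha; have := Int.emod_lt b ha; omega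
      calc f a b = f a (b % a) := by rw [← hmul a b (-(b / a)), Int.emod_def]; ring_nf
        _ = f (b % a) (-a) := (hswap _ _).symm
        _ = f (a.gcd b) 0 := by rw [ih _ hlt _ _ rfl, Int.gcd_neg, Int.gcd_emod, Int.gcd_comm]

section General
variable {G : Type*} [Group G] {g k : G}

theorem closure_pair_mul_right (g k : G) : closure {g, k * g} = closure ({g, k} : Set G) := by
  apply le_antisymm <;> rw [closure_le, Set.insert_subset_iff, Set.singleton_subset_iff]
  · exact ⟨subset_closure (by simp),
      mul_mem (subset_closure (by simp)) (subset_closure (by simp))⟩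
  · refine ⟨subset_closure (by simp), ?_⟩
    simpa using mul_mem (subset_closure (by simp) : k * g ∈ closure {g, k * g})
      (inv_mem (subset_closure (by simp) : g ∈ closure {g, k * g}))

theorem closure_pair_swap_inv (g k : G) : closure {k, g⁻¹} = closure ({g, k} : Set G) := by
  apply le_antisymm <;> rw [closure_le, Set.insert_subset_iff, Set.singleton_subset_iff]
  · exact ⟨subset_closure (by simp), inv_mem (subset_closure (by simp))⟩
  · exact ⟨by simpa using inv_mem (subset_closure (by simp) : g⁻¹ ∈ closure {k, g⁻¹}),
      subset_closure (by simp)⟩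

theorem closure_pair_eq_of_genRel {p q : CommPairs G} (h : genRel G p q) :
    closure {p.1.1, p.1.2} = closure {q.1.1, q.1.2} := by
  rcases h with h | h <;> rw [h]
  exacts [(closure_pair_mul_right _ _).symm, (closure_pair_swap_inv _ _).symm]

theorem mul_comm_of_mem_closure_pair (h : g * k = k * g) :
    ∀ a ∈ closure {g, k}, ∀ b ∈ closure {g, k}, a * b = b * a := by
  have := isMulCommutative_closure (k := {g, k}) (by
    rintro _ (rfl | rfl) _ (rfl | rfl) <;> first | rfl | exact h | exact h.symm)
  exact fun a ha b hb => setLike_mul_comm ha hb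

def closureClass :
    Quot (genRel G) → {H : Subgroup G // ∀ a ∈ H, ∀ b ∈ H, a * b = b * a} :=
  Quot.lift (fun p => ⟨closure {p.1.1, p.1.2}, mul_comm_of_mem_closure_pair p.2⟩)
    fun _ _ hpq => Subtype.ext (closure_pair_eq_of_genRel hpq)

def pairClass (h : Commute g k) : Quot (genRel G) := Quot.mk _ ⟨(g, k), h⟩

theorem pairClass_congr {g' k' : G} (h : Commute g k) (h' : Commute g' k') (hg : g = g')
    (hk : k = k') : pairClass h = pairClass h' := by
  subst hg hk; rfl

theorem pairClass_mul_right (h : Commute g k) :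
    pairClass (h.mul_right (Commute.refl g)) = pairClass h :=
  (Quot.sound (r := genRel G) (Or.inl rfl)).symm

theorem pairClass_swap_inv (h : Commute g k) : pairClass h.symm.inv_right = pairClass h :=
  (Quot.sound (r := genRel G) (Or.inr rfl)).symm

theorem pairClass_swap_of_mul_self (h : Commute g k) (hg : g * g = 1) :
    pairClass h.symm = pairClass h :=
  (pairClass_congr _ _ rfl (inv_eq_of_mul_eq_one_right hg).symm).trans (pairClass_swap_inv h)

theorem pairClass_zpow (x : G) (a b : ℤ) :
    pairClass (Commute.zpow_zpow_self x a b) =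
      pairClass (Commute.one_right (x ^ (a.gcd b : ℤ))) := by
  refine (Int.apply_eq_apply_gcd_zero (fun a b => pairClass (Commute.zpow_zpow_self x a b))
    (fun a b => ?_) (fun a b => ?_) a b).trans (pairClass_congr _ _ rfl (zpow_zero x))
  · exact (pairClass_congr _ _ rfl (zpow_add x b a)).trans (pairClass_mul_right _)
  · exact (pairClass_congr _ _ rfl (zpow_neg x a)).trans (pairClass_swap_inv _)

theorem pairClass_eq_of_closure_eq_zpowers {y : G} (h : Commute g k)
    (hy : closure {g, k} = zpowers y) : pairClass h = pairClass (Commute.one_right y) := by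
  obtain ⟨a, rfl⟩ := mem_zpowers_iff.mp (hy ▸ subset_closure (by simp) : g ∈ zpowers y)
  obtain ⟨b, rfl⟩ := mem_zpowers_iff.mp (hy ▸ subset_closure (by simp) : k ∈ zpowers y)
  set d : ℤ := (a.gcd b : ℤ)
  have hle : closure {y ^ a, y ^ b} ≤ zpowers (y ^ d) := by
    rw [closure_le, Set.insert_subset_iff, Set.singleton_subset_iff]
    have hpow {c : ℤ} (hc : d ∣ c) : y ^ c ∈ zpowers (y ^ d) := by
      obtain ⟨m, rfl⟩ := hc
      exact ⟨m, (zpow_mul y d m).symm⟩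
    exact ⟨hpow (Int.gcd_dvd_left a b), hpow (Int.gcd_dvd_right a b)⟩
  -- `y` is a power of `y ^ d`, which makes `(y ^ d, 1)` a pair of powers of `y` with gcd `1`
  obtain ⟨u, hu⟩ := mem_zpowers_iff.mp (hle (hy ▸ mem_zpowers y))
  have hone : y ^ (d * u - 1) = 1 := by rw [zpow_sub_one, zpow_mul, hu, mul_inv_cancel]
  have hcop : d.gcd (d * u - 1) = 1 := Int.isCoprime_iff_gcd_eq_one.mp ⟨u, -1, by ring⟩
  calc pairClass h = pairClass (Commute.one_right (y ^ d)) := pairClass_zpow y a b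
    _ = pairClass (Commute.zpow_zpow_self y d (d * u - 1)) := pairClass_congr _ _ rfl hone.symm
    _ = pairClass (Commute.one_right y) := by
      rw [pairClass_zpow, hcop, Nat.cast_one, zpow_one]

end General

section Klein
variable {G : Type*} [Group G] {u v : G}

theorem mem_closure_pair_of_mul_self (huv : Commute u v) (hu : u * u = 1) (hv : v * v = 1)
    {x : G} (hx : x ∈ closure {u, v}) : x = 1 ∨ x = u ∨ x = v ∨ x = u * v := by
  have hu' (w : G) : u * (u * w) = w := by rw [← mul_assoc, hu, one_mul]
  have hvu (w : G) : v * (u * w) = u * (v * w) := by rw [← mul_assoc, ← huv.eq, mul_assoc]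
  induction hx using closure_induction with
  | mem x hx => rcases hx with rfl | rfl <;> simp
  | one => simp
  | mul x y _ _ hx hy =>
    rcases hx with rfl | rfl | rfl | rfl <;> rcases hy with rfl | rfl | rfl | rfl <;>
      simp [mul_assoc, hu, hv, hu', hvu, huv.eq.symm]
  | inv x _ hx =>
    rcases hx with rfl | rfl | rfl | rfl <;>
      simp [inv_eq_of_mul_eq_one_right hu, inv_eq_of_mul_eq_one_right hv, huv.eq]

theorem pairClass_eq_of_mem_of_mul_self (huv : Commute u v) (hu : u * u = 1) (hv : v * v = 1)
    {u' v' : G} (h' : Commute u' v') (hu' : u' ∈ ({u, v, u * v} : Set G))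
    (hv' : v' ∈ ({u, v, u * v} : Set G)) (hne : u' ≠ v') : pairClass h' = pairClass huv := by
  have e₁ : pairClass huv.symm = pairClass huv := pairClass_swap_of_mul_self huv hu
  have e₂ : pairClass ((Commute.refl u).mul_right huv) = pairClass huv :=
    (pairClass_congr _ (huv.mul_right (.refl u)) rfl huv.eq).trans (pairClass_mul_right huv)
  have e₃ : pairClass (huv.symm.mul_right (.refl v)) = pairClass huv :=
    (pairClass_mul_right huv.symm).trans e₁
  have e₄ : pairClass ((Commute.refl u).mul_right huv).symm = pairClass huv :=
    (pairClass_swap_of_mul_self _ hu).trans e₂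
  have e₅ : pairClass (huv.symm.mul_right (.refl v)).symm = pairClass huv :=
    (pairClass_swap_of_mul_self _ hv).trans e₃
  rcases hu' with rfl | rfl | rfl <;> rcases hv' with rfl | rfl | rfl <;>
    first | exact absurd rfl hne | assumption | rfl

theorem ne_one_of_closure_pair_ne_zpowers {g k : G} (h : ∀ y, closure {g, k} ≠ zpowers y) :
    g ≠ 1 ∧ k ≠ 1 ∧ g ≠ k := by
  refine ⟨?_, ?_, ?_⟩ <;> rintro rfl
  · exact h k (by rw [closure_insert_one, zpowers_eq_closure])
  · exact h g (by rw [Set.pair_comm, closure_insert_one, zpowers_eq_closure])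
  · exact h g (by rw [Set.pair_eq_singleton, zpowers_eq_closure])

theorem pairClass_eq_of_closure_eq_of_mul_self (huv : Commute u v) (hu : u * u = 1)
    (hv : v * v = 1) {u' v' : G} (h' : Commute u' v') (hcl : closure {u', v'} = closure {u, v})
    (hcyc : ∀ y, closure {u, v} ≠ zpowers y) : pairClass h' = pairClass huv := by
  obtain ⟨hu'1, hv'1, hne⟩ := ne_one_of_closure_pair_ne_zpowers (hcl ▸ hcyc)
  have hmem {x : G} (hx : x ∈ closure {u', v'}) (hx1 : x ≠ 1) : x ∈ ({u, v, u * v} : Set G) :=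
    (mem_closure_pair_of_mul_self huv hu hv (hcl ▸ hx)).resolve_left hx1
  exact pairClass_eq_of_mem_of_mul_self huv hu hv h' (hmem (subset_closure (by simp)) hu'1)
    (hmem (subset_closure (by simp)) hv'1) hne

end Klein

namespace DihedralGroup
variable {n : ℕ}

def rotationHom : Multiplicative (ZMod n) →* DihedralGroup n where
  toFun i := r i.toAdd
  map_one' := rfl
  map_mul' _ _ := rfl

theorem exists_forall_r_mem_iff (H : Subgroup (DihedralGroup n)) :
    ∃ i, ∀ j, r j ∈ H ↔ r j ∈ zpowers (r i) := by
  obtain ⟨t, ht⟩ := (H.comap rotationHom).isCyclic_iff_exists_zpowers_eq_top.mp inferInstance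
  refine ⟨t.toAdd, fun j => ?_⟩
  have hinj : Function.Injective (rotationHom (n := n)) := fun _ _ h => r.inj h
  change r j ∈ H ↔ r j ∈ zpowers (rotationHom t)
  rw [← MonoidHom.map_zpowers, ht]
  exact (mem_map_iff_mem hinj (K := H.comap rotationHom) (x := .ofAdd j)).symm

theorem eq_zpowers_of_forall_sr_notMem {H : Subgroup (DihedralGroup n)} (hH : ∀ c, sr c ∉ H) :
    ∃ i, H = zpowers (r i) := by
  obtain ⟨i, hi⟩ := exists_forall_r_mem_iff H
  refine ⟨i, le_antisymm (fun x hx => ?_) (zpowers_le.mpr ((hi i).mpr (mem_zpowers _)))⟩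
  cases x with
  | r j => exact (hi j).mp hx
  | sr c => exact absurd hx (hH c)

theorem eq_closure_of_sr_mem {H : Subgroup (DihedralGroup n)} {c : ZMod n} (hc : sr c ∈ H) :
    ∃ i, H = closure {r i, sr c} := by
  obtain ⟨i, hi⟩ := exists_forall_r_mem_iff H
  have hrot {j} (hj : r j ∈ H) : r j ∈ closure {r i, sr c} :=
    zpowers_le.mpr (subset_closure (by simp)) ((hi j).mp hj)
  refine ⟨i, le_antisymm (fun x hx => ?_) ?_⟩
  · cases x with
    | r j => exact hrot hx
    | sr b =>
      -- `sr b = r (c - b) * sr c` with `r (c - b) = sr b * sr c ∈ H`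
      have hb : r (c - b) ∈ closure {r i, sr c} := hrot (by simpa using mul_mem hx hc)
      simpa using mul_mem hb (subset_closure (by simp) : sr c ∈ closure {r i, sr c})
  · rw [closure_le, Set.insert_subset_iff, Set.singleton_subset_iff]
    exact ⟨(hi i).mpr (mem_zpowers _), hc⟩

theorem exists_closure_pair_eq (H : Subgroup (DihedralGroup n)) :
    ∃ g k : DihedralGroup n, closure {g, k} = H := by
  by_cases hH : ∃ c, sr c ∈ H
  · obtain ⟨c, hc⟩ := hH
    obtain ⟨i, rfl⟩ := eq_closure_of_sr_mem hc
    exact ⟨r i, sr c, rfl⟩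
  · obtain ⟨i, rfl⟩ := eq_zpowers_of_forall_sr_notMem (not_exists.mp hH)
    exact ⟨r i, r i, by rw [Set.pair_eq_singleton, zpowers_eq_closure]⟩

theorem mul_self_eq_one_of_commute_sr {c : ZMod n} {x : DihedralGroup n}
    (h : Commute (sr c) x) : x * x = 1 := by
  cases x with
  | r i =>
    have h' : c + i = c - i := sr.inj (by rw [← sr_mul_r, ← r_mul_sr]; exact h.eq)
    rw [r_mul_r, ← r_zero]
    congr 1
    linear_combination h'
  | sr b => exact sr_mul_self b

theorem eq_zpowers_or_forall_mul_self_eq_one {H : Subgroup (DihedralGroup n)}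
    (hH : ∀ a ∈ H, ∀ b ∈ H, a * b = b * a) :
    (∃ y, H = zpowers y) ∨ ∀ x ∈ H, x * x = 1 := by
  by_cases hsr : ∃ c, sr c ∈ H
  · obtain ⟨c, hc⟩ := hsr
    exact .inr fun x hx => mul_self_eq_one_of_commute_sr (hH _ hc _ hx)
  · obtain ⟨i, hi⟩ := eq_zpowers_of_forall_sr_notMem (not_exists.mp hsr)
    exact .inl ⟨r i, hi⟩

theorem pairClass_eq_of_closure_eq {g k g' k' : DihedralGroup n} (h : Commute g k)
    (h' : Commute g' k') (hcl : closure {g, k} = closure {g', k'}) :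
    pairClass h = pairClass h' := by
  by_cases hcyc : ∃ y, closure {g, k} = zpowers y
  · obtain ⟨y, hy⟩ := hcyc
    rw [pairClass_eq_of_closure_eq_zpowers h hy,
      pairClass_eq_of_closure_eq_zpowers h' (hcl ▸ hy)]
  · have hinv := (eq_zpowers_or_forall_mul_self_eq_one
      (mul_comm_of_mem_closure_pair h.eq)).resolve_left hcyc
    exact (pairClass_eq_of_closure_eq_of_mul_self h (hinv _ (subset_closure (by simp)))
      (hinv _ (subset_closure (by simp))) h' hcl.symm (not_exists.mp hcyc)).symm

theorem closureClass_injective : Function.Injective (closureClass (G := DihedralGroup n)) := by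
  rintro ⟨⟨g, k⟩, h⟩ ⟨⟨g', k'⟩, h'⟩ hcl
  exact pairClass_eq_of_closure_eq h h' (congrArg Subtype.val hcl)

theorem closureClass_surjective : Function.Surjective (closureClass (G := DihedralGroup n)) := by
  rintro ⟨H, hH⟩
  obtain ⟨g, k, rfl⟩ := exists_closure_pair_eq H
  exact ⟨pairClass (hH g (subset_closure (by simp)) k (subset_closure (by simp))), rfl⟩

end DihedralGroup

theorem dihedral_r1_eq_num_abelian_subgroups_general (n : ℕ) :
    Nat.card (Quot (genRel (DihedralGroup n))) =
      Nat.card {H : Subgroup (DihedralGroup n) // ∀ a ∈ H, ∀ b ∈ H, a * b = b * a} :=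
  Nat.card_eq_of_bijective closureClass
    ⟨DihedralGroup.closureClass_injective, DihedralGroup.closureClass_surjective⟩

theorem dihedral_r1_eq_num_abelian_subgroups (n : ℕ) (hn : 1 ≤ n) :
    Nat.card (Quot (genRel (DihedralGroup n))) =
      Nat.card {H : Subgroup (DihedralGroup n) // ∀ a ∈ H, ∀ b ∈ H, a * b = b * a} :=
  dihedral_r1_eq_num_abelian_subgroups_general n
end

section
/- Let p be a prime and n ≥ 1. Let a_p(n) denote the number of orbits of the action of SL(2, ℤ/pℤ) on the set of n×2 matrices with entries in ℤ/pℤ, acting by right multiplication M ↦ M·A. Then (p² − 1) · a_p(n) = p^{2n−1} + p^{n+1} − p^{n−1} + p² − p − 1; equivalently a_p(n) = (p^{2n−1} + p^{n+1} − p^{n−1} + p² − p − 1)/(p² − 1). (This number equals the invariant r(ℤ_p^n) of the paper.) -/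
/-!
Burnside's lemma: the number `a` of orbits satisfies `a · |SL(2, q)| = ∑_A |Fix(A)|`. A matrix
is fixed by `A` iff each of its rows is, so `|Fix(A)| = |ker(A - 1)|^n` with `A - 1` acting on
row vectors. Since `det (A - 1) = 2 - tr A`, this kernel has dimension 2 for `A = 1`, dimension 1
for the other `A` of trace 2, and dimension 0 otherwise. With `|SL(2, q)| = |GL(2, q)| / (q - 1)
= q³ - q`, and `q²` elements of trace 2 (those `[[1 + x, b], [c, 1 - x]]` with `x² + bc = 0`),
the sum is `(q³ - q) + q² (qⁿ - 1) + (q²ⁿ - qⁿ)`; dividing by `q³ - q` gives the formula.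
-/

/-- The orbit relation of the right-multiplication action of `SL(2, ℤ/pℤ)`
on `n × 2` matrices over `ℤ/pℤ`. -/
def slOrbRel (p n : ℕ) :
    Matrix (Fin n) (Fin 2) (ZMod p) → Matrix (Fin n) (Fin 2) (ZMod p) → Prop :=
  fun M N => ∃ A : Matrix.SpecialLinearGroup (Fin 2) (ZMod p),
    M * (A : Matrix (Fin 2) (Fin 2) (ZMod p)) = N

open Matrix MulAction MulOpposite
open scoped MatrixGroups

lemma card_sq_add_mul_eq_zero {K : Type*} [Field K] [Fintype K] :
    Nat.card {t : K × K × K // t.2.1 ^ 2 + t.1 * t.2.2 = 0} = Fintype.card K ^ 2 := by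
  have fiber (b : K) : Nat.card {xc : K × K // xc.1 ^ 2 + b * xc.2 = 0} = Fintype.card K := by
    rcases eq_or_ne b 0 with rfl | hb
    · have e : {xc : K × K // xc.1 ^ 2 + 0 * xc.2 = 0} ≃ {x : K // x = 0} × K :=
        (Equiv.subtypeEquivRight fun xc => by simp).trans Equiv.prodSubtypeFstEquivSubtypeProd
      rw [Nat.card_congr e]
      simp
    · have e : {xc : K × K // xc.1 ^ 2 + b * xc.2 = 0} ≃ Σ x : K, {c : K // c = -x ^ 2 / b} :=
        (Equiv.subtypeEquivRight fun xc => by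
          rw [eq_div_iff hb]; constructor <;> intro h <;> linear_combination h).trans
          (Equiv.subtypeProdEquivSigmaSubtype fun x c => c = -x ^ 2 / b)
      simp [Nat.card_congr e]
  refine (Nat.card_congr
    (Equiv.subtypeProdEquivSigmaSubtype fun b (xc : K × K) => xc.1 ^ 2 + b * xc.2 = 0)).trans ?_
  simp only [Nat.card_sigma, fiber]
  simp [sq]

namespace Matrix

lemma det_sub_one_fin_two {R : Type*} [CommRing R] (A : Matrix (Fin 2) (Fin 2) R) :
    (A - 1).det = A.det - A.trace + 1 := by
  simp [det_fin_two, trace_fin_two]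
  ring

lemma finrank_ker_vecMulLinear_fin_two {K : Type*} [Field K] [DecidableEq K]
    (B : Matrix (Fin 2) (Fin 2) K) :
    Module.finrank K (LinearMap.ker B.vecMulLinear) =
      if B = 0 then 2 else if B.det = 0 then 1 else 0 := by
  split_ifs with hB hdet
  · subst hB
    rw [show (0 : Matrix (Fin 2) (Fin 2) K).vecMulLinear = 0 by ext; simp, LinearMap.ker_zero,
      finrank_top, Module.finrank_fin_fun]
  · have hbot : LinearMap.ker B.vecMulLinear ≠ ⊥ := by
      obtain ⟨v, hv0, hv⟩ := exists_vecMul_eq_zero_iff.mpr hdet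
      exact fun h => hv0 (by simpa [h] using (LinearMap.mem_ker (f := B.vecMulLinear)).mpr hv)
    have htop : LinearMap.ker B.vecMulLinear ≠ ⊤ := by
      intro h
      refine hB (Matrix.ext fun i j => ?_)
      have : Pi.single i 1 ᵥ* B = 0 := LinearMap.mem_ker.mp (h ▸ Submodule.mem_top)
      simpa using congrFun this j
    have hlt := Submodule.finrank_lt htop
    have hpos := (Module.finrank_pos_iff (R := K)).mpr (Submodule.nontrivial_iff_ne_bot.mpr hbot)
    rw [Module.finrank_fin_fun] at hlt
    omega
  · have hinj : Function.Injective B.vecMul :=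
      vecMul_injective_iff_isUnit.mpr ((isUnit_iff_isUnit_det B).mpr (isUnit_iff_ne_zero.mpr hdet))
    rw [LinearMap.ker_eq_bot.mpr hinj, finrank_bot]

namespace SpecialLinearGroup

section Action

variable {m ι R : Type*} [Fintype ι] [DecidableEq ι] [CommRing R]

lemma card_mul_card_units [Nonempty ι] [Finite R] :
    Nat.card (SpecialLinearGroup ι R) * Nat.card Rˣ = Nat.card (GL ι R) := by
  have hker : Nat.card (GeneralLinearGroup.det (n := ι) (R := R)).ker =
      Nat.card (SpecialLinearGroup ι R) := by
    rw [← Nat.card_range_of_injective toGL_injective, range_toGL]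
    rfl
  rw [← (GeneralLinearGroup.det (n := ι) (R := R)).ker.card_mul_index, Subgroup.index_ker,
    MonoidHom.range_eq_top_of_surjective _ GeneralLinearGroup.det_surjective, Subgroup.card_top,
    hker]

instance : MulAction (SpecialLinearGroup ι R)ᵐᵒᵖ (Matrix m ι R) where
  smul A M := M * (A.unop : Matrix ι ι R)
  one_smul := Matrix.mul_one
  mul_smul _ _ M := (Matrix.mul_assoc M _ _).symm

def fixedByOpEquiv (A : SpecialLinearGroup ι R) :
    fixedBy (Matrix m ι R) (op A) ≃ (m → {v : ι → R // v ᵥ* A = v}) where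
  toFun M i := ⟨M.1 i, congrFun M.2 i⟩
  invFun f := ⟨Matrix.of fun i => (f i).1, funext fun i => (f i).2⟩
  left_inv _ := rfl
  right_inv _ := rfl

lemma card_orbits_mul_card [Fintype m] [Fintype R] [DecidableEq R] :
    Nat.card (orbitRel.Quotient (SpecialLinearGroup ι R)ᵐᵒᵖ (Matrix m ι R)) *
        Nat.card (SpecialLinearGroup ι R) =
      ∑ A : SpecialLinearGroup ι R, Nat.card {v : ι → R // v ᵥ* A = v} ^ Fintype.card m := by
  classical
  let _ : Fintype (SpecialLinearGroup ι R)ᵐᵒᵖ := Fintype.ofEquiv _ opEquiv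
  have burnside :=
    sum_card_fixedBy_eq_card_orbits_mul_card_group (SpecialLinearGroup ι R)ᵐᵒᵖ (Matrix m ι R)
  rw [← Fintype.sum_equiv opEquiv (fun A => Fintype.card (fixedBy _ (op A))) _ fun _ => rfl,
    Fintype.card_congr opEquiv.symm] at burnside
  simp only [Fintype.card_eq_nat_card] at burnside
  simp only [Nat.card_congr (fixedByOpEquiv _), Nat.card_fun, Nat.card_eq_fintype_card (α := m)]
    at burnside
  exact burnside.symm

end Action

section FiniteField

variable {K : Type*} [Field K] [Fintype K]

local notation "q" => Fintype.card K

lemma card_fin_two : Nat.card SL(2, K) = q ^ 3 - q := by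
  have h := card_mul_card_units (ι := Fin 2) (R := K)
  rw [card_GL_field, Nat.card_units, Nat.card_eq_fintype_card (α := K), Fin.prod_univ_two] at h
  have hq : 1 < q := Fintype.one_lt_card
  refine Nat.eq_of_mul_eq_mul_right (Nat.sub_pos_of_lt hq) (h.trans ?_)
  simp only [Fin.val_zero, Fin.val_one, pow_zero, pow_one]
  zify [hq.le, Nat.one_le_pow 2 q (by omega), Nat.le_self_pow (by norm_num : 2 ≠ 0) q,
    Nat.le_self_pow (by norm_num : 3 ≠ 0) q]
  ring

lemma card_trace_eq_two :
    Nat.card {A : SL(2, K) // (A : Matrix (Fin 2) (Fin 2) K).trace = 2} = q ^ 2 := by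
  refine (Nat.card_congr ?_).trans card_sq_add_mul_eq_zero
  exact {
    toFun A := ⟨(A.1 0 1, A.1 0 0 - 1, A.1 1 0), by
      have hdet := A.1.2
      have htr := A.2
      rw [det_fin_two] at hdet
      rw [trace_fin_two] at htr
      linear_combination A.1 0 0 * htr - hdet⟩
    invFun t := ⟨⟨!![1 + t.1.2.1, t.1.1; t.1.2.2, 1 - t.1.2.1], by
        rw [det_fin_two_of]; linear_combination -t.2⟩, by
      rw [trace_fin_two_of]; ring⟩
    left_inv A := by
      have htr := A.2
      rw [trace_fin_two] at htr
      have hd : A.1.1 1 1 = 2 - A.1.1 0 0 := by linear_combination htr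
      ext i j
      fin_cases i <;> fin_cases j <;> simp [hd, sub_sub_eq_add_sub, one_add_one_eq_two]
    right_inv t := by simp }

variable [DecidableEq K]

lemma card_fixedRows_fin_two (A : SL(2, K)) :
    Nat.card {v : Fin 2 → K // v ᵥ* A = v} =
      if A = 1 then q ^ 2 else if (A : Matrix (Fin 2) (Fin 2) K).trace = 2 then q else 1 := by
  have e : {v : Fin 2 → K // v ᵥ* A = v} ≃
      LinearMap.ker (A - 1 : Matrix (Fin 2) (Fin 2) K).vecMulLinear :=
    Equiv.subtypeEquivRight fun v => by simp [sub_eq_zero]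
  have hone : (A : Matrix (Fin 2) (Fin 2) K) - 1 = 0 ↔ A = 1 := by
    rw [sub_eq_zero, ← SpecialLinearGroup.coe_one]
    exact Subtype.coe_injective.eq_iff
  have hdet : ((A : Matrix (Fin 2) (Fin 2) K) - 1).det = 0 ↔
      (A : Matrix (Fin 2) (Fin 2) K).trace = 2 := by
    rw [det_sub_one_fin_two, A.det_coe]
    constructor <;> intro h <;> linear_combination -h
  rw [Nat.card_congr e, Module.natCard_eq_pow_finrank (K := K), finrank_ker_vecMulLinear_fin_two,
    Nat.card_eq_fintype_card]
  simp only [hone, hdet]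
  split_ifs <;> simp

lemma sum_card_fixedRows_pow (k : ℕ) :
    ∑ A : SL(2, K), (Nat.card {v : Fin 2 → K // v ᵥ* A = v} ^ k : ℤ) =
      (q ^ 3 - q) + q ^ 2 * (q ^ k - 1) + (q ^ (2 * k) - q ^ k) := by
  have decomp (A : SL(2, K)) : (Nat.card {v : Fin 2 → K // v ᵥ* A = v} ^ k : ℤ) =
      1 + (if (A : Matrix (Fin 2) (Fin 2) K).trace = 2 then (q : ℤ) ^ k - 1 else 0) +
        (if A = 1 then (q : ℤ) ^ (2 * k) - q ^ k else 0) := by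
    rw [card_fixedRows_fin_two]
    rcases eq_or_ne A 1 with rfl | h1
    · simp [trace_one, ← pow_mul]
    · simp only [h1, if_false]
      split_ifs <;> push_cast <;> ring
  have hG : (Finset.univ : Finset SL(2, K)).card = q ^ 3 - q := by
    rw [Finset.card_univ, Fintype.card_eq_nat_card, card_fin_two]
  have hT : (Finset.univ.filter fun A : SL(2, K) => (A : Matrix (Fin 2) (Fin 2) K).trace = 2).card =
      q ^ 2 := by
    rw [← Fintype.card_subtype, Fintype.card_eq_nat_card, card_trace_eq_two]
  simp only [decomp, Finset.sum_add_distrib, Finset.sum_ite_eq', Finset.mem_univ, if_true,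
    Finset.sum_ite, Finset.sum_const_zero, add_zero, Finset.sum_const, nsmul_eq_mul, hT, hG]
  rw [Nat.cast_sub (Nat.le_self_pow (by norm_num) q)]
  push_cast
  ring

lemma sq_sub_one_mul_card_orbits {k : ℕ} (hk : 1 ≤ k) :
    ((q : ℤ) ^ 2 - 1) * Nat.card (orbitRel.Quotient SL(2, K)ᵐᵒᵖ (Matrix (Fin k) (Fin 2) K)) =
      q ^ (2 * k - 1) + q ^ (k + 1) - q ^ (k - 1) + q ^ 2 - q - 1 := by
  have burnside :=
    congrArg (Nat.cast : ℕ → ℤ) (card_orbits_mul_card (m := Fin k) (ι := Fin 2) (R := K))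
  rw [card_fin_two, Fintype.card_fin, Nat.cast_sum, Nat.cast_mul,
    Nat.cast_sub (Nat.le_self_pow (by norm_num) q)] at burnside
  push_cast at burnside
  rw [sum_card_fixedRows_pow] at burnside
  have hq : (q : ℤ) ≠ 0 := by exact_mod_cast Fintype.card_ne_zero
  have e1 : (q : ℤ) ^ (2 * k) = q ^ (2 * k - 1) * q := by rw [← pow_succ]; congr 1; omega
  have e2 : (q : ℤ) ^ k = q ^ (k - 1) * q := by rw [← pow_succ]; congr 1; omega
  apply mul_right_cancel₀ hq
  linear_combination burnside + e1 - e2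

end FiniteField

end SpecialLinearGroup

end Matrix

lemma slOrbRel_iff_orbitRel {p n : ℕ} (M N : Matrix (Fin n) (Fin 2) (ZMod p)) :
    slOrbRel p n M N ↔ orbitRel SL(2, ZMod p)ᵐᵒᵖ _ M N := by
  rw [Setoid.comm', orbitRel_apply]
  exact ⟨fun ⟨A, h⟩ => ⟨op A, h⟩, fun ⟨A, h⟩ => ⟨A.unop, h⟩⟩

lemma card_quot_slOrbRel (p n : ℕ) : Nat.card (Quot (slOrbRel p n)) =
    Nat.card (orbitRel.Quotient SL(2, ZMod p)ᵐᵒᵖ (Matrix (Fin n) (Fin 2) (ZMod p))) :=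
  Nat.card_congr (Quot.congrRight slOrbRel_iff_orbitRel)

theorem orbit_count_formula (p n : ℕ) [Fact p.Prime] (hn : 1 ≤ n) :
    (p ^ 2 - 1) * Nat.card (Quot (slOrbRel p n)) =
      p ^ (2 * n - 1) + p ^ (n + 1) - p ^ (n - 1) + p ^ 2 - p - 1 := by
  have key := SpecialLinearGroup.sq_sub_one_mul_card_orbits (K := ZMod p) hn
  rw [ZMod.card, ← card_quot_slOrbRel] at key
  have hp := (Fact.out : p.Prime).two_le
  have h1 : p ^ (n - 1) ≤ p ^ (n + 1) := Nat.pow_le_pow_right (by omega) (by omega)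
  have h2 : p ≤ p ^ 2 := Nat.le_self_pow (by norm_num) p
  have h3 : 1 ≤ p ^ (2 * n - 1) := Nat.one_le_pow _ _ (by omega)
  zify [h2.trans' (by omega : 1 ≤ p), show p ^ (n - 1) ≤ p ^ (2 * n - 1) + p ^ (n + 1) by omega,
    show p ≤ p ^ (2 * n - 1) + p ^ (n + 1) - p ^ (n - 1) + p ^ 2 by omega,
    show 1 ≤ p ^ (2 * n - 1) + p ^ (n + 1) - p ^ (n - 1) + p ^ 2 - p by omega]
  exact key
end

section
/- Let p be a prime and n ≥ 1. The set of (n+1)×2 matrices over ℤ/pℤ whose last row is nonzero is invariant under the right-multiplication action of SL(2, ℤ/pℤ), and the number of orbits of SL(2, ℤ/pℤ) on this set equals p^{n−1}(pⁿ + p − 1). -/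
/-!
SL₂ moves every nonzero row vector to `e₀ = (1, 0)`, and the stabiliser of `e₀` consists of the
transvections `[[1, 0], [c, 1]]`. Hence every orbit contains a matrix whose last row is `e₀` and
whose other rows are `(aᵢ, bᵢ)`, and two such matrices lie in the same orbit iff they have the
same `b` and their `a` differ by a multiple of `b`. The orbits are therefore parametrised by pairs
`(b, a mod 𝔽ₚ·b)`: `pⁿ` of them for `b = 0` and `pⁿ⁻¹` for each of the `pⁿ - 1` nonzero `b`.
-/

open Matrix
open scoped MatrixGroups

section Counting

variable (K V : Type*) [DivisionRing K] [AddCommGroup V] [Module K V]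

theorem Submodule.card_quotient_span_singleton_mul_card {b : V} (hb : b ≠ 0) :
    Nat.card (V ⧸ K ∙ b) * Nat.card K = Nat.card V := by
  rw [Submodule.card_eq_card_quotient_mul_card (K ∙ b), mul_comm,
    Nat.card_congr (LinearEquiv.toSpanNonzeroSingleton K V b hb).toEquiv]

theorem card_sigma_quotient_span_singleton_mul_card [Fintype K] [Fintype V] :
    Nat.card (Σ b : V, V ⧸ K ∙ b) * Nat.card K =
      Nat.card V * (Nat.card V + Nat.card K - 1) := by
  classical
  have hV : 1 ≤ Nat.card V := Nat.card_pos
  have hK : 1 ≤ Nat.card K := Nat.card_pos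
  have hzero : Nat.card (V ⧸ K ∙ (0 : V)) = Nat.card V := by
    rw [Submodule.span_singleton_eq_bot.mpr rfl]
    exact Nat.card_congr (Submodule.quotEquivOfEqBot ⊥ rfl).toEquiv
  rw [Nat.card_sigma, Finset.sum_mul, Fintype.sum_eq_add_sum_compl 0, hzero,
    Finset.sum_congr rfl fun b hb =>
      Submodule.card_quotient_span_singleton_mul_card K V (by simpa using hb),
    Finset.sum_const, Finset.card_compl, Finset.card_singleton, ← Nat.card_eq_fintype_card,
    smul_eq_mul]
  zify [hV, show 1 ≤ Nat.card V + Nat.card K by omega]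
  ring

end Counting

section SpecialLinearGroup

variable {ι R : Type*} [Fintype ι] [DecidableEq ι] [CommRing R]

theorem vecMul_vecMul_SL_inv (v : ι → R) (A : SpecialLinearGroup ι R) :
    v ᵥ* (A : Matrix ι ι R) ᵥ* ((A⁻¹ : SpecialLinearGroup ι R) : Matrix ι ι R) = v := by
  rw [vecMul_vecMul, ← Matrix.SpecialLinearGroup.coe_mul, mul_inv_cancel,
    Matrix.SpecialLinearGroup.coe_one, vecMul_one]

theorem vecMul_SL_ne_zero {v : ι → R} (hv : v ≠ 0) (A : SpecialLinearGroup ι R) :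
    v ᵥ* (A : Matrix ι ι R) ≠ 0 := by
  intro h
  apply hv
  rw [← vecMul_vecMul_SL_inv v A, h, zero_vecMul]

end SpecialLinearGroup

section SL2

variable {R K : Type*} [CommRing R] [Field K]

theorem isCoprime_of_ne_zero {v : Fin 2 → K} (hv : v ≠ 0) : IsCoprime (v 0) (v 1) := by
  by_cases h0 : v 0 = 0
  · have h1 : v 1 ≠ 0 := fun h1 => hv (funext fun i => by fin_cases i <;> assumption)
    exact ⟨0, (v 1)⁻¹, by simp [h1]⟩
  · exact ⟨(v 0)⁻¹, 0, by simp [h0]⟩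

theorem exists_vecMul_SL_eq_single {v : Fin 2 → K} (hv : v ≠ 0) :
    ∃ A : SL(2, K), v ᵥ* (A : Matrix (Fin 2) (Fin 2) K) = Pi.single 0 1 := by
  obtain ⟨g, hg0, hg1⟩ := (isCoprime_of_ne_zero hv).exists_SL2_row 0
  have hv : Pi.single 0 1 ᵥ* (g : Matrix (Fin 2) (Fin 2) K) = v := by
    rw [single_one_vecMul]
    ext i
    fin_cases i <;> simp [hg0, hg1]
  exact ⟨g⁻¹, by rw [← hv, vecMul_vecMul_SL_inv]⟩

theorem eq_transvection_of_single_vecMul_eq {A : SL(2, R)}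
    (hA : Pi.single 0 1 ᵥ* (A : Matrix (Fin 2) (Fin 2) R) = Pi.single 0 1) :
    A = SpecialLinearGroup.transvection one_ne_zero (A 1 0) := by
  rw [single_one_vecMul] at hA
  have h00 : A 0 0 = 1 := by simpa using congrFun hA 0
  have h01 : A 0 1 = 0 := by simpa using congrFun hA 1
  have h11 : A 1 1 = 1 := by
    have hdet := A.2
    rwa [det_fin_two, h00, h01, one_mul, zero_mul, sub_zero] at hdet
  ext i j
  fin_cases i <;> fin_cases j <;> simp [SpecialLinearGroup.transvection_coe, h00, h01, h11]

end SL2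

section NormalForm

variable {R K : Type*} [CommRing R] [Field K] {n : ℕ}

def normalForm (a b : Fin n → R) : Matrix (Fin (n + 1)) (Fin 2) R :=
  Matrix.of (Fin.snoc (α := fun _ => Fin 2 → R) (fun i => ![a i, b i]) (Pi.single 0 1))

theorem normalForm_last (a b : Fin n → R) : normalForm a b (Fin.last n) = Pi.single 0 1 := by
  funext j
  simp [normalForm]

theorem normalForm_injective2 : Function.Injective2 (normalForm (R := R) (n := n)) := by
  intro a b a' b' h
  constructor <;> funext i
  · simpa [normalForm] using congrFun (congrFun h i.castSucc) 0
  · simpa [normalForm] using congrFun (congrFun h i.castSucc) 1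

theorem eq_normalForm {M : Matrix (Fin (n + 1)) (Fin 2) R}
    (hM : M (Fin.last n) = Pi.single 0 1) :
    M = normalForm (fun i => M i.castSucc 0) (fun i => M i.castSucc 1) := by
  ext i j
  induction i using Fin.lastCases with
  | last => rw [normalForm_last, hM]
  | cast i => fin_cases j <;> simp [normalForm]

theorem normalForm_mul_transvection (a b : Fin n → R) (c : R) :
    normalForm a b * ((SpecialLinearGroup.transvection one_ne_zero c : SL(2, R)) :
      Matrix (Fin 2) (Fin 2) R) = normalForm (a + c • b) b := by
  change normalForm a b * transvection 1 0 c = _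
  ext i j
  fin_cases j
  · induction i using Fin.lastCases <;> simp [normalForm, add_comm]
  · induction i using Fin.lastCases <;> simp [normalForm]

variable (R n) in
abbrev NonzeroLastRow := {M : Matrix (Fin (n + 1)) (Fin 2) R // M (Fin.last n) ≠ 0}

variable (R n) in
def slOrbitRel (M N : NonzeroLastRow R n) : Prop :=
  ∃ A : SL(2, R), M.1 * (A : Matrix (Fin 2) (Fin 2) R) = N.1

theorem equivalence_slOrbitRel : Equivalence (slOrbitRel R n) where
  refl _ := ⟨1, by simp⟩
  symm := fun ⟨A, hA⟩ => ⟨A⁻¹, by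
    rw [← hA, Matrix.mul_assoc, ← Matrix.SpecialLinearGroup.coe_mul, mul_inv_cancel,
      Matrix.SpecialLinearGroup.coe_one, Matrix.mul_one]⟩
  trans := fun ⟨A, hA⟩ ⟨B, hB⟩ => ⟨A * B, by
    rw [Matrix.SpecialLinearGroup.coe_mul, ← Matrix.mul_assoc, hA, hB]⟩

def NonzeroLastRow.normalForm [Nontrivial R] (a b : Fin n → R) : NonzeroLastRow R n :=
  ⟨_root_.normalForm a b, by rw [normalForm_last]; exact Pi.single_ne_zero_iff.2 one_ne_zero⟩

theorem slOrbitRel_normalForm_iff [Nontrivial R] {a b a' b' : Fin n → R} :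
    slOrbitRel R n (.normalForm a b) (.normalForm a' b') ↔ b = b' ∧ a - a' ∈ R ∙ b := by
  constructor
  · rintro ⟨A, hA⟩
    have hlast := congrFun hA (Fin.last n)
    simp only [NonzeroLastRow.normalForm, mul_apply_eq_vecMul, normalForm_last] at hlast
    rw [eq_transvection_of_single_vecMul_eq hlast] at hA
    obtain ⟨ha, hb⟩ := normalForm_injective2 ((normalForm_mul_transvection a b _).symm.trans hA)
    exact ⟨hb, Submodule.mem_span_singleton.2 ⟨-_, by rw [← ha, neg_smul, sub_add_cancel_left]⟩⟩
  · rintro ⟨rfl, hab⟩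
    obtain ⟨c, hc⟩ := Submodule.mem_span_singleton.1 hab
    exact ⟨_, by rw [NonzeroLastRow.normalForm, NonzeroLastRow.normalForm,
      normalForm_mul_transvection, neg_smul, ← sub_eq_add_neg, hc, sub_sub_cancel]⟩

theorem exists_slOrbitRel_normalForm (M : NonzeroLastRow K n) :
    ∃ a b, slOrbitRel K n M (.normalForm a b) := by
  obtain ⟨A, hA⟩ := exists_vecMul_SL_eq_single M.2
  exact ⟨_, _, A, eq_normalForm (M := M.1 * (A : Matrix (Fin 2) (Fin 2) K)) hA⟩

def normalFormOrbit [Nontrivial R] :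
    (Σ b : Fin n → R, (Fin n → R) ⧸ R ∙ b) → Quot (slOrbitRel R n)
  | ⟨b, q⟩ => Quotient.liftOn' q (fun a => Quot.mk _ (.normalForm a b)) fun _ _ h =>
      Quot.sound (slOrbitRel_normalForm_iff.2 ⟨rfl, (Submodule.quotientRel_def _).1 h⟩)

theorem normalFormOrbit_bijective : Function.Bijective (normalFormOrbit (R := K) (n := n)) := by
  constructor
  · rintro ⟨b, q⟩ ⟨b', q'⟩ h
    obtain ⟨a, rfl⟩ := Submodule.Quotient.mk_surjective _ q
    obtain ⟨a', rfl⟩ := Submodule.Quotient.mk_surjective _ q'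
    obtain ⟨rfl, hab⟩ := slOrbitRel_normalForm_iff.1
      (equivalence_slOrbitRel.eqvGen_iff.1 (Quot.eqvGen_exact h))
    exact congrArg (Sigma.mk b) ((Submodule.Quotient.eq _).2 hab)
  · refine Quot.ind fun M => ?_
    obtain ⟨a, b, h⟩ := exists_slOrbitRel_normalForm M
    exact ⟨⟨b, Submodule.Quotient.mk a⟩, (Quot.sound h).symm⟩

end NormalForm

theorem orbits_on_matrices_with_nonzero_last_row (p n : ℕ) [Fact p.Prime] (hn : 1 ≤ n) :
    -- the set of matrices with nonzero last row is invariant under right multiplication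
    (∀ M : Matrix (Fin (n + 1)) (Fin 2) (ZMod p), M (Fin.last n) ≠ 0 →
      ∀ A : Matrix.SpecialLinearGroup (Fin 2) (ZMod p),
        (M * (A : Matrix (Fin 2) (Fin 2) (ZMod p))) (Fin.last n) ≠ 0) ∧
    -- and the number of orbits on this set is p^(n-1) * (p^n + p - 1)
    Nat.card (Quot (fun (M N : {M : Matrix (Fin (n + 1)) (Fin 2) (ZMod p) //
          M (Fin.last n) ≠ 0}) =>
        ∃ A : Matrix.SpecialLinearGroup (Fin 2) (ZMod p),
          (M : Matrix (Fin (n + 1)) (Fin 2) (ZMod p)) * (A : Matrix (Fin 2) (Fin 2) (ZMod p))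
            = (N : Matrix (Fin (n + 1)) (Fin 2) (ZMod p)))) =
      p ^ (n - 1) * (p ^ n + p - 1) := by
  refine ⟨fun M hM A => vecMul_SL_ne_zero hM A, ?_⟩
  change Nat.card (Quot (slOrbitRel (ZMod p) n)) = _
  rw [← Nat.card_eq_of_bijective _ normalFormOrbit_bijective]
  apply Nat.eq_of_mul_eq_mul_right (Fact.out : p.Prime).pos
  have hcount := card_sigma_quotient_span_singleton_mul_card (ZMod p) (Fin n → ZMod p)
  rw [Nat.card_fun, Nat.card_zmod, Nat.card_fin] at hcount
  rw [hcount, mul_right_comm, ← pow_succ, Nat.sub_add_cancel hn]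
end

section
/- For every n ≥ 1, the number of subgroups of the dihedral group D_{2n} of order 2n equals τ(n) + σ(n), where τ(n) is the number of positive divisors of n and σ(n) is the sum of the positive divisors of n. -/
/-!
A subgroup `H` of `D_{2n}` is determined by its rotation subgroup `A ≤ ℤ/n` together with the
set of `j` such that `s r^j ∈ H`, and that set is either empty or a single coset of `A`. Hence
`D_{2n}` has `∑_{A ≤ ℤ/n} ([ℤ/n : A] + 1)` subgroups. The subgroups of the cyclic group `ℤ/n`
are in bijection with the divisors of `n` via their index, so the sum is `σ(n) + τ(n)`.
-/

open Finset

section Cyclic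

variable {G : Type*} [CommGroup G] [IsCyclic G] [Finite G]

@[to_additive]
theorem Subgroup.eq_ker_powMonoidHom_card (H : Subgroup G) :
    H = (powMonoidHom (Nat.card H) : G →* G).ker := by
  refine Subgroup.eq_of_le_of_card_ge (fun x hx => ?_) ?_
  · exact congrArg Subtype.val (pow_card_eq_one' (x := (⟨x, hx⟩ : H)))
  · rw [IsCyclic.card_powMonoidHom_ker, Nat.gcd_eq_right H.card_subgroup_dvd_card]

@[to_additive]
noncomputable def IsCyclic.subgroupEquivDivisors : Subgroup G ≃ (Nat.card G).divisors where
  toFun H :=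
    ⟨Nat.card H, Nat.mem_divisors.2 ⟨H.card_subgroup_dvd_card, (Nat.card_pos (α := G)).ne'⟩⟩
  invFun d := (powMonoidHom d.1 : G →* G).ker
  left_inv H := H.eq_ker_powMonoidHom_card.symm
  right_inv d := Subtype.ext <| by
    simp only [IsCyclic.card_powMonoidHom_ker, Nat.gcd_eq_right (Nat.dvd_of_mem_divisors d.2)]

@[to_additive]
theorem IsCyclic.sum_card_subgroup [Fintype (Subgroup G)] {M : Type*} [AddCommMonoid M]
    (f : ℕ → M) : ∑ H : Subgroup G, f (Nat.card H) = ∑ d ∈ (Nat.card G).divisors, f d := by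
  rw [← sum_coe_sort (Nat.card G).divisors f]
  exact Fintype.sum_equiv (subgroupEquivDivisors (G := G)) _ _ fun _ => rfl

@[to_additive]
theorem IsCyclic.sum_index_subgroup [Fintype (Subgroup G)] {M : Type*} [AddCommMonoid M]
    (f : ℕ → M) : ∑ H : Subgroup G, f H.index = ∑ d ∈ (Nat.card G).divisors, f d := by
  rw [← Nat.sum_div_divisors, ← sum_card_subgroup]
  congr! with H
  exact (Nat.div_eq_of_eq_mul_right (Nat.card_pos (α := H)) H.card_mul_index.symm).symm

end Cyclic

namespace DihedralGroup

variable {n : ℕ}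

def rotations (H : Subgroup (DihedralGroup n)) : AddSubgroup (ZMod n) where
  carrier := {i | r i ∈ H}
  zero_mem' := H.one_mem
  add_mem' ha hb := H.mul_mem ha hb
  neg_mem' ha := H.inv_mem ha

@[simp]
theorem mem_rotations {H : Subgroup (DihedralGroup n)} {i : ZMod n} :
    i ∈ rotations H ↔ r i ∈ H := Iff.rfl

/-- The subgroup with rotation part `A` whose reflections are the `sr j` with `j ∈ c` if
`o = some c`, and which has no reflections if `o = none`. -/
def subgroupOfCoset (A : AddSubgroup (ZMod n)) (o : Option (ZMod n ⧸ A)) :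
    Subgroup (DihedralGroup n) where
  carrier := {x | match x with
    | r i => i ∈ A
    | sr j => o = some (j : ZMod n ⧸ A)}
  one_mem' := A.zero_mem
  mul_mem' := by
    rintro (i | i) (j | j) hi hj
    · exact A.add_mem hi hj
    · show o = some _
      simpa [QuotientAddGroup.mk_sub, (QuotientAddGroup.eq_zero_iff i).2 hi] using hj
    · show o = some _
      simpa [QuotientAddGroup.mk_add, (QuotientAddGroup.eq_zero_iff j).2 hj] using hi
    · have hij : (i : ZMod n ⧸ A) = j := Option.some_injective _ (hi.symm.trans hj)
      show j - i ∈ A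
      rwa [← neg_add_eq_sub, ← QuotientAddGroup.eq]
  inv_mem' := by
    rintro (i | i) hi
    · exact A.neg_mem hi
    · exact hi

@[simp]
theorem sr_mem_subgroupOfCoset {A : AddSubgroup (ZMod n)} {o : Option (ZMod n ⧸ A)}
    {j : ZMod n} :
    sr j ∈ subgroupOfCoset A o ↔ o = some (j : ZMod n ⧸ A) := Iff.rfl

theorem subgroupOfCoset_injective (A : AddSubgroup (ZMod n)) :
    Function.Injective (subgroupOfCoset A) := fun o o' h =>
  Option.ext <| QuotientAddGroup.mk_surjective.forall.2 fun j => by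
    simpa using SetLike.ext_iff.1 h (sr j)

theorem exists_subgroupOfCoset_rotations_eq (H : Subgroup (DihedralGroup n)) :
    ∃ o, subgroupOfCoset (rotations H) o = H := by
  by_cases h : ∃ j, sr j ∈ H
  · obtain ⟨j, hj⟩ := h
    refine ⟨some j, SetLike.ext fun
      | r i => Iff.rfl
      | sr a => ?_⟩
    rw [sr_mem_subgroupOfCoset, Option.some_inj, QuotientAddGroup.eq, mem_rotations,
      neg_add_eq_sub, ← sr_mul_sr, H.mul_mem_cancel_left hj]
  · refine ⟨none, SetLike.ext fun
      | r i => Iff.rfl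
      | sr a => iff_of_false (by simp) fun ha => h ⟨a, ha⟩⟩

noncomputable def rotationsFiberEquiv (A : AddSubgroup (ZMod n)) :
    Option (ZMod n ⧸ A) ≃ {H : Subgroup (DihedralGroup n) // rotations H = A} :=
  Equiv.ofBijective (fun o => ⟨subgroupOfCoset A o, rfl⟩) <| by
    refine ⟨fun o o' h => subgroupOfCoset_injective A (congrArg Subtype.val h), ?_⟩
    rintro ⟨H, rfl⟩
    obtain ⟨o, ho⟩ := exists_subgroupOfCoset_rotations_eq H
    exact ⟨o, Subtype.ext ho⟩

theorem card_subgroup [NeZero n] [Fintype (AddSubgroup (ZMod n))] :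
    Nat.card (Subgroup (DihedralGroup n)) = ∑ A : AddSubgroup (ZMod n), (A.index + 1) := by
  rw [← Nat.card_congr (Equiv.sigmaFiberEquiv rotations), Nat.card_sigma]
  refine sum_congr rfl fun A _ => ?_
  rw [← Nat.card_congr (rotationsFiberEquiv A), Finite.card_option, AddSubgroup.index_eq_card]

end DihedralGroup

theorem num_subgroups_dihedral (n : ℕ) (hn : 1 ≤ n) :
    Nat.card (Subgroup (DihedralGroup n)) = n.divisors.card + ∑ d ∈ n.divisors, d := by
  have : NeZero n := ⟨by omega⟩
  let := Fintype.ofFinite (AddSubgroup (ZMod n))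
  rw [DihedralGroup.card_subgroup, IsAddCyclic.sum_index_addSubgroup (fun d => d + 1),
    Nat.card_zmod, sum_add_distrib, card_eq_sum_ones, add_comm]
end

section
/- For every n ≥ 1, the number of subgroups of the dicyclic group Dic_n of order 4n equals τ(2n) + σ(n), where τ(2n) is the number of positive divisors of 2n and σ(n) is the sum of the positive divisors of n. -/
/-!
Write the elements of `Dic_n` as `a i` and `xa i` with `i : ZMod (2 * n)`. A subgroup `H` is
determined by `K = {i | a i ∈ H}` and `C = {i | xa i ∈ H}`. Either `C` is empty, or it is a
single coset of `K`, and then `n ∈ K` because `(xa j)² = a n`; conversely every such pair comes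
from a subgroup. So there are as many subgroups as subgroups of `ZMod (2 * n)`, namely `τ(2n)`,
plus, for every `K ⊇ ⟨n⟩`, the `[ZMod (2 * n) : K]` cosets of `K`. Subgroups `K ⊇ ⟨n⟩`
correspond, with the same index, to subgroups of the cyclic quotient of order `n`, and in a
cyclic group of order `m` the subgroups are the kernels of `x ↦ x ^ d` for `d ∣ m`, of index
`m / d`; summing gives `σ(n)`.
-/

namespace IsCyclic

variable {G : Type*} [CommGroup G] [IsCyclic G] [Finite G]

@[to_additive]
theorem eq_ker_powMonoidHom_card (H : Subgroup G) :
    H = (powMonoidHom (Nat.card H) : G →* G).ker := by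
  refine Subgroup.eq_of_le_of_card_ge (fun x hx => ?_) ?_
  · rw [MonoidHom.mem_ker, powMonoidHom_apply]
    exact congrArg Subtype.val (pow_card_eq_one' (x := (⟨x, hx⟩ : H)))
  · rw [card_powMonoidHom_ker, Nat.gcd_eq_right H.card_subgroup_dvd_card]

variable (G) in
@[to_additive]
noncomputable def subgroupEquivDivisors_s14 : Subgroup G ≃ (Nat.card G).divisors where
  toFun H := ⟨Nat.card H, Nat.mem_divisors.2 ⟨H.card_subgroup_dvd_card, Nat.card_pos.ne'⟩⟩
  invFun d := (powMonoidHom d.1 : G →* G).ker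
  left_inv H := (eq_ker_powMonoidHom_card H).symm
  right_inv d := Subtype.ext <| by
    change Nat.card (powMonoidHom d.1 : G →* G).ker = d
    rw [card_powMonoidHom_ker, Nat.gcd_eq_right (Nat.mem_divisors.1 d.2).1]

@[to_additive]
theorem card_subgroup : Nat.card (Subgroup G) = (Nat.card G).divisors.card := by
  rw [Nat.card_congr (subgroupEquivDivisors_s14 G), Nat.card_eq_finsetCard]

@[to_additive]
theorem card_sigma_quotient :
    Nat.card (Σ H : Subgroup G, G ⧸ H) = ∑ d ∈ (Nat.card G).divisors, d := by
  rw [← Nat.card_congr (Equiv.sigmaCongrLeft (subgroupEquivDivisors_s14 G).symm), Nat.card_sigma,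
    ← Nat.sum_div_divisors, ← Finset.sum_coe_sort (Nat.card G).divisors]
  refine Fintype.sum_congr _ _ fun d => ?_
  conv_rhs => rw [← Nat.gcd_eq_right (Nat.mem_divisors.1 d.2).1]
  exact index_powMonoidHom_ker G d

@[to_additive]
theorem card_sigma_quotient_of_le (N : Subgroup G) :
    Nat.card (Σ H : {H : Subgroup G // N ≤ H}, G ⧸ H.1) = ∑ d ∈ N.index.divisors, d := by
  have : IsCyclic (G ⧸ N) := isCyclic_of_surjective _ (QuotientGroup.mk'_surjective N)
  rw [N.index_eq_card, ← card_sigma_quotient]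
  exact Nat.card_congr <| Equiv.sigmaCongr (QuotientGroup.comapMk'OrderIso N).symm.toEquiv
    fun H => (QuotientGroup.quotientQuotientEquivQuotient N H.1 H.2).symm.toEquiv

end IsCyclic

theorem ZMod.index_zmultiples_natCast {m d : ℕ} [NeZero m] (hd : d ∣ m) :
    (AddSubgroup.zmultiples (d : ZMod m)).index = d := by
  have hm : 0 < m := Nat.pos_of_neZero m
  have hcard : Nat.card (AddSubgroup.zmultiples (d : ZMod m)) = m / d := by
    rw [Nat.card_zmultiples, ZMod.addOrderOf_coe _ hm.ne', Nat.gcd_eq_right hd]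
  have hindex := (AddSubgroup.zmultiples (d : ZMod m)).index_mul_card
  rw [hcard, Nat.card_zmod] at hindex
  exact Nat.eq_of_mul_eq_mul_right
    (Nat.div_pos (Nat.le_of_dvd hm hd) (Nat.pos_of_dvd_of_pos hd hm))
    (hindex.trans (Nat.mul_div_cancel' hd).symm)

namespace QuaternionGroup

variable {n : ℕ}

@[simp]
theorem inv_a (i : ZMod (2 * n)) : (a i)⁻¹ = a (-i) := rfl

@[simp]
theorem inv_xa (i : ZMod (2 * n)) : (xa i)⁻¹ = xa ((n : ZMod (2 * n)) + i) := rfl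

def cyclicPart (H : Subgroup (QuaternionGroup n)) : AddSubgroup (ZMod (2 * n)) where
  carrier := {i | a i ∈ H}
  add_mem' {i j} hi hj := by simpa only [Set.mem_ofPred_eq, a_mul_a] using H.mul_mem hi hj
  zero_mem' := by simpa only [Set.mem_ofPred_eq, a_zero] using H.one_mem
  neg_mem' {i} hi := by simpa only [Set.mem_ofPred_eq, inv_a] using H.inv_mem hi

@[simp]
theorem mem_cyclicPart {H : Subgroup (QuaternionGroup n)} {i : ZMod (2 * n)} :
    i ∈ cyclicPart H ↔ a i ∈ H :=
  Iff.rfl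

def subgroupOfCyclic (K : AddSubgroup (ZMod (2 * n))) : Subgroup (QuaternionGroup n) where
  carrier := {g | match g with | a i => i ∈ K | xa _ => False}
  mul_mem' := by
    rintro (i | i) (j | j) hi hj
    exacts [K.add_mem hi hj, hj.elim, hi.elim, hi.elim]
  one_mem' := K.zero_mem
  inv_mem' := by
    rintro (i | i) hi
    exacts [K.neg_mem hi, hi.elim]

@[simp]
theorem xa_notMem_subgroupOfCyclic {K : AddSubgroup (ZMod (2 * n))} (i : ZMod (2 * n)) :
    xa i ∉ subgroupOfCyclic K :=
  id

def subgroupOfCoset (K : AddSubgroup (ZMod (2 * n))) (hK : (n : ZMod (2 * n)) ∈ K)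
    (c : ZMod (2 * n) ⧸ K) : Subgroup (QuaternionGroup n) where
  carrier := {g | match g with | a i => i ∈ K | xa i => (i : ZMod (2 * n) ⧸ K) = c}
  mul_mem' := by
    rintro (i | i) (j | j) hi hj
    · exact K.add_mem hi hj
    · show ((j - i : ZMod (2 * n)) : ZMod (2 * n) ⧸ K) = c
      rwa [QuotientAddGroup.mk_sub, (QuotientAddGroup.eq_zero_iff i).2 hi, sub_zero]
    · show ((i + j : ZMod (2 * n)) : ZMod (2 * n) ⧸ K) = c
      rwa [QuotientAddGroup.mk_add, (QuotientAddGroup.eq_zero_iff j).2 hj, add_zero]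
    · have hij : j - i ∈ K := QuotientAddGroup.eq_iff_sub_mem.1 <|
        (hj : (j : ZMod (2 * n) ⧸ K) = c).trans (hi : (i : ZMod (2 * n) ⧸ K) = c).symm
      show (n + j - i : ZMod (2 * n)) ∈ K
      simpa only [add_sub_assoc] using K.add_mem hK hij
  one_mem' := K.zero_mem
  inv_mem' := by
    rintro (i | i) hi
    · exact K.neg_mem hi
    · show ((n + i : ZMod (2 * n)) : ZMod (2 * n) ⧸ K) = c
      rwa [QuotientAddGroup.mk_add, (QuotientAddGroup.eq_zero_iff _).2 hK, zero_add]

@[simp]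
theorem xa_mem_subgroupOfCoset {K : AddSubgroup (ZMod (2 * n))} {hK : (n : ZMod (2 * n)) ∈ K}
    {c : ZMod (2 * n) ⧸ K} {i : ZMod (2 * n)} :
    xa i ∈ subgroupOfCoset K hK c ↔ (i : ZMod (2 * n) ⧸ K) = c :=
  Iff.rfl

section cyclicPart

variable {H : Subgroup (QuaternionGroup n)} {j : ZMod (2 * n)}

theorem natCast_mem_cyclicPart (hj : xa j ∈ H) : (n : ZMod (2 * n)) ∈ cyclicPart H := by
  simpa only [mem_cyclicPart, xa_sq] using H.pow_mem hj 2

theorem xa_mem_iff_sub_mem_cyclicPart (hj : xa j ∈ H) (i : ZMod (2 * n)) :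
    xa i ∈ H ↔ i - j ∈ cyclicPart H := by
  rw [← H.mul_mem_cancel_left (H.inv_mem hj), inv_xa, xa_mul_xa, mem_cyclicPart,
    add_sub_add_left_eq_sub]

theorem subgroupOfCyclic_cyclicPart (hH : ∀ j, xa j ∉ H) :
    subgroupOfCyclic (cyclicPart H) = H := by
  ext (i | i)
  · rfl
  · exact iff_of_false (xa_notMem_subgroupOfCyclic i) (hH i)

theorem subgroupOfCoset_cyclicPart (hj : xa j ∈ H) :
    subgroupOfCoset (cyclicPart H) (natCast_mem_cyclicPart hj) j = H := by
  ext (i | i)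
  · rfl
  · rw [xa_mem_subgroupOfCoset, QuotientAddGroup.eq_iff_sub_mem,
      xa_mem_iff_sub_mem_cyclicPart hj]

end cyclicPart

def subgroupOfSum :
    AddSubgroup (ZMod (2 * n)) ⊕
      (Σ K : {K : AddSubgroup (ZMod (2 * n)) // AddSubgroup.zmultiples (n : ZMod (2 * n)) ≤ K},
        ZMod (2 * n) ⧸ K.1) →
    Subgroup (QuaternionGroup n) :=
  Sum.elim subgroupOfCyclic fun K => subgroupOfCoset K.1.1 (AddSubgroup.zmultiples_le.1 K.1.2) K.2

theorem subgroupOfSum_injective : Function.Injective (subgroupOfSum (n := n)) := by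
  rintro (K₁ | ⟨⟨K₁, hK₁⟩, c₁⟩) (K₂ | ⟨⟨K₂, hK₂⟩, c₂⟩) h
  · exact congrArg Sum.inl (congrArg cyclicPart h)
  · obtain ⟨j, rfl⟩ := QuotientAddGroup.mk_surjective c₂
    exact absurd ((SetLike.ext_iff.1 h (xa j)).2 rfl) (xa_notMem_subgroupOfCyclic j)
  · obtain ⟨j, rfl⟩ := QuotientAddGroup.mk_surjective c₁
    exact absurd ((SetLike.ext_iff.1 h (xa j)).1 rfl) (xa_notMem_subgroupOfCyclic j)
  · obtain rfl : K₁ = K₂ := congrArg cyclicPart h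
    obtain ⟨j, rfl⟩ := QuotientAddGroup.mk_surjective c₁
    obtain rfl : (j : ZMod (2 * n) ⧸ K₁) = c₂ := (SetLike.ext_iff.1 h (xa j)).1 rfl
    rfl

theorem subgroupOfSum_surjective : Function.Surjective (subgroupOfSum (n := n)) := by
  intro H
  by_cases hH : ∃ j, xa j ∈ H
  · obtain ⟨j, hj⟩ := hH
    have hK := AddSubgroup.zmultiples_le.2 (natCast_mem_cyclicPart hj)
    exact ⟨.inr ⟨⟨cyclicPart H, hK⟩, j⟩, subgroupOfCoset_cyclicPart hj⟩
  · exact ⟨.inl (cyclicPart H), subgroupOfCyclic_cyclicPart (not_exists.1 hH)⟩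

theorem card_subgroup [NeZero n] :
    Nat.card (Subgroup (QuaternionGroup n)) = Nat.card (AddSubgroup (ZMod (2 * n))) +
      Nat.card (Σ K : {K : AddSubgroup (ZMod (2 * n)) //
        AddSubgroup.zmultiples (n : ZMod (2 * n)) ≤ K}, ZMod (2 * n) ⧸ K.1) := by
  rw [← Nat.card_sum, Nat.card_congr
    (Equiv.ofBijective _ ⟨subgroupOfSum_injective, subgroupOfSum_surjective⟩)]

end QuaternionGroup

theorem num_subgroups_dicyclic (n : ℕ) (hn : 1 ≤ n) :
    Nat.card (Subgroup (QuaternionGroup n)) = (2 * n).divisors.card + ∑ d ∈ n.divisors, d := by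
  have : NeZero n := ⟨by omega⟩
  rw [QuaternionGroup.card_subgroup, IsAddCyclic.card_addSubgroup,
    IsAddCyclic.card_sigma_quotient_of_le, Nat.card_zmod,
    ZMod.index_zmultiples_natCast (dvd_mul_left n 2)]
end
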